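/- Every finite connected simple graph G with χ(G) ≥ 4 has a spanning tree T such that BBC_2(G,T) = χ(G), and every spanning tree T' of G satisfies BBC_2(G,T') ≥ χ(G). -/

import Mathlib

/-- A proper `k`-coloring of `G`: colors are taken in `{1, …, k}` and adjacent
vertices receive different colors. -/
def IsProperColoring {V : Type*} (G : SimpleGraph V) (k : ℕ) (c : V → ℕ) : Prop :=
  (∀ v : V, 1 ≤ c v ∧ c v ≤ k) ∧ ∀ ⦃u v : V⦄, G.Adj u v → c u ≠ c v

/-- The chromatic number of `G`: the least `k` such that `G` has a proper
`k`-coloring. -/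
noncomputable def chromNum {V : Type*} (G : SimpleGraph V) : ℕ :=
  sInf {k : ℕ | ∃ c : V → ℕ, IsProperColoring G k c}

/-- A `q`-backbone `k`-coloring of `(G, H)`: a proper `k`-coloring of `G` such
that the colors of the endpoints of every edge of `H` differ by at least `q`. -/
def IsBackboneColoring {V : Type*} (G H : SimpleGraph V) (q k : ℕ) (c : V → ℕ) : Prop :=
  IsProperColoring G k c ∧ ∀ ⦃u v : V⦄, H.Adj u v → (q : ℤ) ≤ |(c u : ℤ) - (c v : ℤ)|

/-- The `q`-backbone chromatic number `BBC_q(G, H)`: the least `k` for which a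
`q`-backbone `k`-coloring of `(G, H)` exists. -/
noncomputable def BBC {V : Type*} (G H : SimpleGraph V) (q : ℕ) : ℕ :=
  sInf {k : ℕ | ∃ c : V → ℕ, IsBackboneColoring G H q k c}

/-!
The lower bound holds because every backbone coloring is proper. For the tree, it suffices to find
a proper `χ(G)`-coloring `c` whose gap graph (the edges `uv` of `G` with `|c u - c v| ≥ 2`) is
connected: any spanning tree of the gap graph works. Take `c` maximizing the component `A` of a
fixed vertex in the gap graph. If `A` is not everything, every edge of `G` leaving `A` has colors
differing by exactly one. Recoloring the vertices outside `A` by a transposition of colors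
`s ↔ t` keeps the coloring proper as long as no leaving edge `xy` gets `c y` mapped onto `c x`;
with at least four colors such a transposition can always be chosen so that some leaving edge
gets a gap `≥ 2`, which enlarges the component.
-/

open SimpleGraph

lemma le_abs_natCast_sub_iff {q a b : ℕ} :
    (q : ℤ) ≤ |(a : ℤ) - b| ↔ a + q ≤ b ∨ b + q ≤ a := by
  rw [le_abs']
  omega

lemma exists_swap_of_adjacent_pairs {k : ℕ} (hk : 4 ≤ k) {P : ℕ → ℕ → Prop}
    (hP : ∀ ⦃i j⦄, P i j → 1 ≤ i ∧ i ≤ k ∧ 1 ≤ j ∧ j ≤ k ∧ (i = j + 1 ∨ j = i + 1))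
    {i₀ j₀ : ℕ} (h₀ : P i₀ j₀) :
    ∃ s t, 1 ≤ s ∧ s ≤ k ∧ 1 ≤ t ∧ t ≤ k ∧ (∀ ⦃i j⦄, P i j → Equiv.swap s t j ≠ i) ∧
      ∃ i j, P i j ∧ (i + 2 ≤ Equiv.swap s t j ∨ Equiv.swap s t j + 2 ≤ i) := by
  by_cases hfar : ∃ i j t, P i j ∧ 1 ≤ t ∧ t ≤ k ∧ (t + 2 ≤ i ∨ i + 2 ≤ t) ∧ (t + 2 ≤ j ∨ j + 2 ≤ t)
  · obtain ⟨i, j, t, hij, ht₁, htk, hti, htj⟩ := hfar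
    have := hP hij
    refine ⟨j, t, by omega, by omega, ht₁, htk, fun i' j' h' ↦ ?_, i, j, hij, ?_⟩
    · have := hP h'
      rw [Equiv.swap_apply_def]
      split_ifs <;> omega
    · rw [Equiv.swap_apply_left]
      omega
  push Not at hfar
  have hcentral : ∀ ⦃i j⦄, P i j → (i = 2 ∧ j = 3 ∨ i = 3 ∧ j = 2) ∧ k = 4 := fun i j h ↦ by
    have := hP h
    have := hfar i j 1 h le_rfl (by omega)
    have := hfar i j k h (by omega) le_rfl
    omega
  obtain ⟨⟨rfl, rfl⟩ | ⟨rfl, rfl⟩, rfl⟩ := hcentral h₀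
  · refine ⟨3, 4, by omega, by omega, by omega, le_rfl, fun i j h ↦ ?_, 2, 3, h₀, by decide⟩
    obtain ⟨⟨rfl, rfl⟩ | ⟨rfl, rfl⟩, -⟩ := hcentral h <;> decide
  · refine ⟨1, 2, le_rfl, by omega, by omega, by omega, fun i j h ↦ ?_, 3, 2, h₀, by decide⟩
    obtain ⟨⟨rfl, rfl⟩ | ⟨rfl, rfl⟩, -⟩ := hcentral h <;> decide

section Coloring

variable {V : Type*}

lemma exists_isBackboneColoring [Finite V] (G H : SimpleGraph V) (q : ℕ) :
    ∃ k c, IsBackboneColoring G H q k c := by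
  obtain ⟨n, ⟨e⟩⟩ := Finite.exists_equiv_fin V
  have hspread : ∀ i j : ℕ, i < j → (q + 1) * i + (q + 1) ≤ (q + 1) * j := fun i j hij ↦ by
    simpa [Nat.mul_succ] using Nat.mul_le_mul_left (q + 1) hij
  have hsep : ∀ ⦃u v⦄, u ≠ v →
      (q + 1) * e u + (q + 1) ≤ (q + 1) * e v ∨ (q + 1) * e v + (q + 1) ≤ (q + 1) * e u :=
    fun u v huv ↦ (Fin.val_injective.ne (e.injective.ne huv)).lt_or_gt.imp (hspread _ _)
      (hspread _ _)
  refine ⟨(q + 1) * n, fun v ↦ (q + 1) * e v + 1, ⟨fun v ↦ ⟨Nat.le_add_left _ _, ?_⟩,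
    fun u v huv ↦ ?_⟩, fun u v huv ↦ ?_⟩ <;> beta_reduce
  · have := hspread _ _ (e v).isLt
    omega
  · have := hsep huv.ne
    omega
  · rw [le_abs_natCast_sub_iff]
    have := hsep huv.ne
    omega

lemma chromNum_le_BBC [Finite V] (G H : SimpleGraph V) (q : ℕ) : chromNum G ≤ BBC G H q := by
  have hne : {k | ∃ c, IsBackboneColoring G H q k c}.Nonempty := exists_isBackboneColoring G H q
  obtain ⟨c, hc⟩ := Nat.sInf_mem hne
  exact Nat.sInf_le ⟨c, hc.1⟩

lemma exists_isProperColoring_chromNum [Finite V] (G : SimpleGraph V) :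
    ∃ c, IsProperColoring G (chromNum G) c := by
  obtain ⟨k, c, hc⟩ := exists_isBackboneColoring G G 0
  exact Nat.sInf_mem (s := {k | ∃ c, IsProperColoring G k c}) ⟨k, c, hc.1⟩

lemma IsProperColoring.piecewise_swap {G : SimpleGraph V} {k : ℕ} {c : V → ℕ}
    (hc : IsProperColoring G k c) (A : Set V) [DecidablePred (· ∈ A)] {s t : ℕ}
    (hs₁ : 1 ≤ s) (hsk : s ≤ k) (ht₁ : 1 ≤ t) (htk : t ≤ k)
    (hcross : ∀ ⦃x y⦄, x ∈ A → y ∉ A → G.Adj x y → Equiv.swap s t (c y) ≠ c x) :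
    IsProperColoring G k (A.piecewise c (Equiv.swap s t ∘ c)) := by
  refine ⟨fun v ↦ ?_, fun u v huv ↦ ?_⟩
  · have := hc.1 v
    by_cases hv : v ∈ A
    · simpa [hv]
    · simp only [hv, not_false_eq_true, Set.piecewise_eq_of_notMem, Function.comp_apply,
        Equiv.swap_apply_def]
      split_ifs <;> omega
  · by_cases hu : u ∈ A <;> by_cases hv : v ∈ A <;>
      simp only [hu, hv, not_false_eq_true, Set.piecewise_eq_of_mem, Set.piecewise_eq_of_notMem,
        Function.comp_apply]
    · exact hc.2 huv
    · exact (hcross hu hv huv).symm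
    · exact hcross hv hu huv.symm
    · exact (Equiv.swap s t).injective.ne (hc.2 huv)

def gapGraph (G : SimpleGraph V) (q : ℕ) (c : V → ℕ) : SimpleGraph V where
  Adj u v := G.Adj u v ∧ (q : ℤ) ≤ |(c u : ℤ) - c v|
  symm := ⟨fun _ _ h ↦ ⟨h.1.symm, by rw [abs_sub_comm]; exact h.2⟩⟩
  loopless := ⟨fun v h ↦ G.loopless.irrefl v h.1⟩

@[simp]
lemma gapGraph_adj {G : SimpleGraph V} {q : ℕ} {c : V → ℕ} {u v : V} :
    (gapGraph G q c).Adj u v ↔ G.Adj u v ∧ (q : ℤ) ≤ |(c u : ℤ) - c v| :=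
  Iff.rfl

lemma gapGraph_le (G : SimpleGraph V) (q : ℕ) (c : V → ℕ) : gapGraph G q c ≤ G :=
  fun _ _ h ↦ h.1

lemma SimpleGraph.Walk.reachable_gapGraph_of_eq {G : SimpleGraph V} {q : ℕ} {c c' : V → ℕ}
    {u v : V}
    (h : ∀ w, (gapGraph G q c).Reachable w v → c' w = c w) (p : (gapGraph G q c).Walk u v) :
    (gapGraph G q c').Reachable u v := by
  induction p with
  | nil => rfl
  | @cons u w v huw p ih =>
    rw [gapGraph_adj] at huw
    refine Adj.reachable (gapGraph_adj.2 ⟨huw.1, ?_⟩) |>.trans (ih h)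
    rw [h u ⟨.cons huw p⟩, h w ⟨p⟩]
    exact huw.2

variable [Finite V] {G : SimpleGraph V} {k : ℕ}

lemma exists_ncard_reachable_gapGraph_lt (hG : G.Connected) (hk : 4 ≤ k) {c : V → ℕ}
    (hc : IsProperColoring G k c) {v₀ w : V} (hw : ¬ (gapGraph G 2 c).Reachable v₀ w) :
    ∃ c', IsProperColoring G k c' ∧ {w | (gapGraph G 2 c).Reachable v₀ w}.ncard <
      {w | (gapGraph G 2 c').Reachable v₀ w}.ncard := by
  classical
  set A := {w | (gapGraph G 2 c).Reachable v₀ w}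
  obtain ⟨d, -, hdA, hdA'⟩ := (hG.preconnected v₀ w).some.exists_boundary_dart A .rfl hw
  let P i j := ∃ x y, x ∈ A ∧ y ∉ A ∧ G.Adj x y ∧ c x = i ∧ c y = j
  have hP : ∀ ⦃i j⦄, P i j → 1 ≤ i ∧ i ≤ k ∧ 1 ≤ j ∧ j ≤ k ∧ (i = j + 1 ∨ j = i + 1) := by
    rintro _ _ ⟨x, y, hx, hy, hxy, rfl, rfl⟩
    have hgap : ¬ (c x + 2 ≤ c y ∨ c y + 2 ≤ c x) := fun h ↦
      hy (hx.trans (gapGraph_adj.2 ⟨hxy, le_abs_natCast_sub_iff.2 h⟩).reachable)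
    have := hc.1 x
    have := hc.1 y
    have := hc.2 hxy
    omega
  obtain ⟨s, t, hs₁, hsk, ht₁, htk, hcross, _, _, ⟨x, y, hx, hy, hxy, rfl, rfl⟩, hfar⟩ :=
    exists_swap_of_adjacent_pairs hk hP ⟨_, _, hdA, hdA', d.adj, rfl, rfl⟩
  set c' := A.piecewise c (Equiv.swap s t ∘ c)
  have hAc' : ∀ a ∈ A, (gapGraph G 2 c').Reachable v₀ a := fun a ha ↦
    (Walk.reachable_gapGraph_of_eq (c' := c') (fun b hb ↦ Set.piecewise_eq_of_mem _ _ _ hb.symm)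
      ha.some.reverse).symm
  have hy' : (gapGraph G 2 c').Reachable v₀ y := by
    refine (hAc' x hx).trans (Adj.reachable (gapGraph_adj.2 ⟨hxy, ?_⟩))
    have hcx : c' x = c x := Set.piecewise_eq_of_mem _ _ _ hx
    have hcy : c' y = Equiv.swap s t (c y) := Set.piecewise_eq_of_notMem _ _ _ hy
    rw [le_abs_natCast_sub_iff, hcx, hcy]
    exact hfar
  refine ⟨c', hc.piecewise_swap A hs₁ hsk ht₁ htk fun x y hx hy hxy ↦ hcross ⟨x, y, hx, hy, hxy,
    rfl, rfl⟩, Set.ncard_lt_ncard ⟨hAc', fun hA ↦ hy (hA hy')⟩⟩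

lemma IsProperColoring.exists_connected_gapGraph (hG : G.Connected) (hk : 4 ≤ k) {c : V → ℕ}
    (hc : IsProperColoring G k c) :
    ∃ c', IsProperColoring G k c' ∧ (gapGraph G 2 c').Connected := by
  obtain ⟨v₀⟩ := hG.nonempty
  induction c using (measure fun c ↦
    Nat.card V - {w | (gapGraph G 2 c).Reachable v₀ w}.ncard).wf.induction with | _ c ih
  by_cases hall : ∀ w, (gapGraph G 2 c).Reachable v₀ w
  · exact ⟨c, hc, (connected_iff_exists_forall_reachable _).2 ⟨v₀, hall⟩⟩
  push Not at hall
  obtain ⟨w, hw⟩ := hall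
  obtain ⟨c', hc', hlt⟩ := exists_ncard_reachable_gapGraph_lt hG hk hc hw
  have := Set.ncard_le_card {w | (gapGraph G 2 c').Reachable v₀ w}
  exact ih c' (show Nat.card V - {w | (gapGraph G 2 c').Reachable v₀ w}.ncard <
    Nat.card V - {w | (gapGraph G 2 c).Reachable v₀ w}.ncard by omega) hc'

end Coloring

/-- Every connected graph `G` with `χ(G) ≥ 4` has a spanning tree `T` with
`BBC_2(G,T) = χ(G)`, and every spanning tree `T'` of `G` satisfies
`BBC_2(G,T') ≥ χ(G)`. -/
theorem stmt_7 {V : Type*} [Fintype V] (G : SimpleGraph V) (hG : G.Connected)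
    (hchi : 4 ≤ chromNum G) :
    (∃ T : SimpleGraph V, T ≤ G ∧ T.IsTree ∧ BBC G T 2 = chromNum G) ∧
    (∀ T' : SimpleGraph V, T' ≤ G → T'.IsTree → chromNum G ≤ BBC G T' 2) := by
  obtain ⟨c₀, hc₀⟩ := exists_isProperColoring_chromNum G
  obtain ⟨c, hc, hconn⟩ := hc₀.exists_connected_gapGraph hG hchi
  obtain ⟨T, hTc, hT⟩ := hconn.exists_isTree_le
  refine ⟨⟨T, hTc.trans (gapGraph_le G 2 c), hT, ?_⟩, fun T' _ _ ↦ chromNum_le_BBC G T' 2⟩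
  exact le_antisymm (Nat.sInf_le ⟨c, hc, fun u v huv ↦ (gapGraph_adj.1 (hTc huv)).2⟩)
    (chromNum_le_BBC G T 2)
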